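/- Let f : N^m → Z be a function such that f is non-increasing in each coordinate (i.e., f(a + e_i) ≤ f(a) for all a and i) and bounded below. Then f is eventually constant: there exists b ∈ N^m such that f(a) = f(b) for all a ≥ b componentwise. -/

import Mathlib

/-!
The order on `ℕ^m` is generated by unit steps `a ⋖ a + eᵢ`, so `f` is antitone. Being bounded
below, `f` attains its minimum at some `b`, and antitonicity pins `f` to that minimum above `b`.
-/

lemma exists_eq_add_single_of_covBy {ι : Type*} [DecidableEq ι] {a b : ι → ℕ} (h : a ⋖ b) :
    ∃ i, b = a + Pi.single i 1 := by
  obtain ⟨i, hi, heq⟩ := Pi.covBy_iff.1 h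
  refine ⟨i, funext fun j => ?_⟩
  obtain rfl | hj := eq_or_ne j i
  · simpa using (Nat.covBy_iff_add_one_eq.1 hi).symm
  · simp [hj, heq j hj]

theorem antitone_of_forall_add_single_le {ι β : Type*} [Fintype ι] [DecidableEq ι] [Preorder β]
    {f : (ι → ℕ) → β} (h : ∀ a i, f (a + Pi.single i 1) ≤ f a) : Antitone f :=
  (antitone_iff_forall_covBy f).2 fun a _ hab => by
    obtain ⟨i, rfl⟩ := exists_eq_add_single_of_covBy hab
    exact h a i

/-- A function `f : ℕ^m → ℤ` that is non-increasing in each coordinate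
and bounded below is eventually constant: there exists `b ∈ ℕ^m` such that
`f a = f b` for all `a ≥ b` componentwise. -/
theorem eventually_constant_of_antitone_bddBelow (m : ℕ) (f : (Fin m → ℕ) → ℤ)
    (hmono : ∀ (a : Fin m → ℕ) (i : Fin m),
      f (a + fun j => if j = i then 1 else 0) ≤ f a)
    (hbdd : ∃ B : ℤ, ∀ a : Fin m → ℕ, B ≤ f a) :
    ∃ b : Fin m → ℕ, ∀ a : Fin m → ℕ, b ≤ a → f a = f b := by
  have hanti : Antitone f := antitone_of_forall_add_single_le fun a i => by
    simpa only [← Pi.single_apply] using hmono a i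
  have hbdd' : BddBelow (Set.range f) := hbdd.imp fun _ => Set.forall_mem_range.2
  obtain ⟨b, hb⟩ := Int.csInf_mem (Set.range_nonempty f) hbdd'
  exact ⟨b, fun a hba => (hanti hba).antisymm (hb ▸ csInf_le hbdd' (Set.mem_range_self a))⟩
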